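/- arXiv:2202.08489 — 2 statements merged into one kernel-verified Lean document; each statement's English description precedes it below -/
import Mathlib

section
/- Let P ∈ ℝ^{U×L}, A ∈ ℝ^{m×U}, let S, S̃ ∈ ℝ^{L×L} be positive definite, and let ε ∈ (0,1/2). If S̃ ≈_ε S, then A·(P S̃⁻¹ Pᵀ)^{∘2}·Aᵀ ≈_{2ε} A·(P S⁻¹ Pᵀ)^{∘2}·Aᵀ. -/
/-!
In the Loewner order, `S̃ ≈_ε S` is the sandwich `e^{-ε} S ≤ S̃ ≤ e^{ε} S`. Inversion is antitone
on positive definite matrices (the quadratic form of `S⁻¹` is the Legendre dual of that of `S`), so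
it turns the sandwich into `e^{-ε} S⁻¹ ≤ S̃⁻¹ ≤ e^{ε} S⁻¹`, and congruence by `P` keeps it. By the
Schur product theorem the Hadamard product is monotone on positive semidefinite matrices, so
taking Hadamard squares gives a sandwich with `e^{∓2ε}`, which congruence by `A` again keeps.
-/

open Matrix
open scoped MatrixOrder ComplexOrder

namespace Matrix

variable {m n : Type*}

section RCLike

variable {𝕜 : Type*} [RCLike 𝕜]

lemma PosDef.of_le {A B : Matrix n n 𝕜} (hA : A.PosDef) (hAB : A ≤ B) : B.PosDef := by
  simpa using hA.add_posSemidef (le_iff.1 hAB)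

lemma mul_mul_conjTranspose_le_mul_mul_conjTranspose [Fintype m] [Fintype n]
    {A B : Matrix n n 𝕜} (hAB : A ≤ B) (P : Matrix m n 𝕜) : P * A * Pᴴ ≤ P * B * Pᴴ := by
  rw [le_iff, ← Matrix.sub_mul, ← Matrix.mul_sub]
  exact (le_iff.1 hAB).mul_mul_conjTranspose_same P

lemma hadamard_le_hadamard {A B C D : Matrix n n 𝕜} (hA : 0 ≤ A) (hD : 0 ≤ D) (hAB : A ≤ B)
    (hCD : C ≤ D) : A ⊙ C ≤ B ⊙ D := by
  have h : B ⊙ D - A ⊙ C = (B - A) ⊙ D + A ⊙ (D - C) := by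
    ext i j
    simp only [sub_apply, add_apply, hadamard_apply]
    ring
  rw [le_iff, h]
  exact ((le_iff.1 hAB).hadamard hD.posSemidef).add (hA.posSemidef.hadamard (le_iff.1 hCD))

end RCLike

section Real

variable [Fintype n]

lemma dotProduct_mulVec_le_of_le {A B : Matrix n n ℝ} (hAB : A ≤ B) (x : n → ℝ) :
    x ⬝ᵥ A *ᵥ x ≤ x ⬝ᵥ B *ᵥ x := by
  have := (le_iff.1 hAB).dotProduct_mulVec_nonneg x
  rw [star_trivial, sub_mulVec, dotProduct_sub] at this
  linarith

lemma le_of_forall_dotProduct_mulVec_le {A B : Matrix n n ℝ} (hA : A.IsHermitian)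
    (hB : B.IsHermitian) (h : ∀ x, x ⬝ᵥ A *ᵥ x ≤ x ⬝ᵥ B *ᵥ x) : A ≤ B := by
  refine .of_dotProduct_mulVec_nonneg (hB.sub hA) fun x ↦ ?_
  rw [star_trivial, sub_mulVec, dotProduct_sub, sub_nonneg]
  exact h x

/-- Expand `0 ≤ (y - A⁻¹ x) ⬝ A (y - A⁻¹ x)`. Equality holds at `y = A⁻¹ x`, so this is the
variational formula for the quadratic form of `A⁻¹`. -/
lemma PosDef.two_mul_dotProduct_sub_le [DecidableEq n] {A : Matrix n n ℝ} (hA : A.PosDef)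
    (x y : n → ℝ) :
    2 * (x ⬝ᵥ y) - y ⬝ᵥ A *ᵥ y ≤ x ⬝ᵥ A⁻¹ *ᵥ x := by
  set z := A⁻¹ *ᵥ x
  have hAz : A *ᵥ z = x := by
    rw [mulVec_mulVec, mul_nonsing_inv _ ((isUnit_iff_isUnit_det A).1 hA.isUnit), one_mulVec]
  have hzAy : z ⬝ᵥ A *ᵥ y = x ⬝ᵥ y := by
    rw [dotProduct_mulVec, ← mulVec_transpose, (isHermitian_iff_isSymm.1 hA.isHermitian).eq, hAz]
  have h := hA.posSemidef.dotProduct_mulVec_nonneg (y - z)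
  rw [star_trivial, mulVec_sub, hAz, dotProduct_sub, sub_dotProduct, sub_dotProduct, hzAy,
    dotProduct_comm z x, dotProduct_comm y x] at h
  linarith

lemma PosDef.inv_le_inv_of_le [DecidableEq n] {A B : Matrix n n ℝ} (hA : A.PosDef)
    (hAB : A ≤ B) : B⁻¹ ≤ A⁻¹ := by
  have hB := hA.of_le hAB
  refine le_of_forall_dotProduct_mulVec_le hB.inv.isHermitian hA.inv.isHermitian fun x ↦ ?_
  set y := B⁻¹ *ᵥ x
  have hBy : B *ᵥ y = x := by
    rw [mulVec_mulVec, mul_nonsing_inv _ ((isUnit_iff_isUnit_det B).1 hB.isUnit), one_mulVec]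
  calc x ⬝ᵥ B⁻¹ *ᵥ x = 2 * (x ⬝ᵥ y) - y ⬝ᵥ B *ᵥ y := by
        rw [hBy, dotProduct_comm y x]; ring
    _ ≤ 2 * (x ⬝ᵥ y) - y ⬝ᵥ A *ᵥ y := by gcongr; exact dotProduct_mulVec_le_of_le hAB y
    _ ≤ x ⬝ᵥ A⁻¹ *ᵥ x := hA.two_mul_dotProduct_sub_le x y

lemma inv_exp_smul [DecidableEq n] (A : Matrix n n ℝ) (c : ℝ) :
    (Real.exp c • A)⁻¹ = Real.exp (-c) • A⁻¹ := by
  by_cases hA : IsUnit A.det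
  · exact inv_eq_left_inv (by simp [smul_smul, ← Real.exp_add, nonsing_inv_mul _ hA])
  · have hcA : ¬IsUnit (Real.exp c • A).det := by
      simpa [det_smul, (Real.exp_pos c).ne'] using hA
    rw [nonsing_inv_apply_not_isUnit _ hA, nonsing_inv_apply_not_isUnit _ hcA, smul_zero]

/-- `SpectralApprox ε At A` is `At ≈_ε A`, stated in the Loewner order. -/
def SpectralApprox (ε : ℝ) (At A : Matrix n n ℝ) : Prop :=
  Real.exp (-ε) • A ≤ At ∧ At ≤ Real.exp ε • A

namespace SpectralApprox

variable {ε : ℝ} {At A : Matrix n n ℝ}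

lemma of_forall_dotProduct_mulVec (hAt : At.IsHermitian) (hA : A.IsHermitian)
    (h : ∀ x, Real.exp (-ε) * (x ⬝ᵥ A *ᵥ x) ≤ x ⬝ᵥ At *ᵥ x ∧
      x ⬝ᵥ At *ᵥ x ≤ Real.exp ε * (x ⬝ᵥ A *ᵥ x)) :
    SpectralApprox ε At A :=
  ⟨le_of_forall_dotProduct_mulVec_le (hA.smul (.all _)) hAt fun x ↦ by
      simpa [smul_mulVec, dotProduct_smul] using (h x).1,
    le_of_forall_dotProduct_mulVec_le hAt (hA.smul (.all _)) fun x ↦ by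
      simpa [smul_mulVec, dotProduct_smul] using (h x).2⟩

lemma dotProduct_mulVec (h : SpectralApprox ε At A) (x : n → ℝ) :
    Real.exp (-ε) * (x ⬝ᵥ A *ᵥ x) ≤ x ⬝ᵥ At *ᵥ x ∧
      x ⬝ᵥ At *ᵥ x ≤ Real.exp ε * (x ⬝ᵥ A *ᵥ x) := by
  simpa [smul_mulVec, dotProduct_smul] using
    And.intro (dotProduct_mulVec_le_of_le h.1 x) (dotProduct_mulVec_le_of_le h.2 x)

lemma inv [DecidableEq n] (h : SpectralApprox ε At A) (hA : A.PosDef) :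
    SpectralApprox ε At⁻¹ A⁻¹ := by
  have hεA : (Real.exp (-ε) • A).PosDef := hA.smul (Real.exp_pos _)
  have hAt : At.PosDef := hεA.of_le h.1
  constructor
  · simpa [inv_exp_smul] using hAt.inv_le_inv_of_le h.2
  · simpa [inv_exp_smul] using hεA.inv_le_inv_of_le h.1

lemma mul_mul_transpose [Fintype m] (h : SpectralApprox ε At A) (P : Matrix m n ℝ) :
    SpectralApprox ε (P * At * Pᵀ) (P * A * Pᵀ) := by
  simpa [SpectralApprox, Matrix.mul_smul, Matrix.smul_mul, conjTranspose_eq_transpose_of_trivial]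
    using And.intro (mul_mul_conjTranspose_le_mul_mul_conjTranspose h.1 P)
      (mul_mul_conjTranspose_le_mul_mul_conjTranspose h.2 P)

omit [Fintype n] in
lemma hadamard_self (h : SpectralApprox ε At A) (hA : A.PosSemidef) :
    SpectralApprox (2 * ε) (At ⊙ At) (A ⊙ A) := by
  have hsq (c : ℝ) : Real.exp (2 * c) • (A ⊙ A) = (Real.exp c • A) ⊙ (Real.exp c • A) := by
    rw [smul_hadamard, hadamard_smul, smul_smul, ← Real.exp_add, two_mul]
  have hεA (c : ℝ) : 0 ≤ Real.exp c • A := (hA.smul (Real.exp_pos c).le).nonneg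
  have hAt : 0 ≤ At := (hεA _).trans h.1
  constructor
  · rw [← mul_neg, hsq]
    exact hadamard_le_hadamard (hεA _) hAt h.1 h.1
  · rw [hsq]
    exact hadamard_le_hadamard hAt (hεA _) h.2 h.2

end SpectralApprox

end Real

end Matrix

theorem stmt_7_general {U L m : ℕ} (P : Matrix (Fin U) (Fin L) ℝ) (A : Matrix (Fin m) (Fin U) ℝ)
    (S St : Matrix (Fin L) (Fin L) ℝ) (hS : S.PosDef) (hSt : St.PosDef)
    (ε : ℝ)
    (happrox : ∀ x : Fin L → ℝ,
      Real.exp (-ε) * (x ⬝ᵥ S.mulVec x) ≤ x ⬝ᵥ St.mulVec x ∧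
      x ⬝ᵥ St.mulVec x ≤ Real.exp ε * (x ⬝ᵥ S.mulVec x)) :
    ∀ x : Fin m → ℝ,
      Real.exp (-(2*ε)) * (x ⬝ᵥ (A * ((P * S⁻¹ * Pᵀ) ⊙ (P * S⁻¹ * Pᵀ)) * Aᵀ).mulVec x)
        ≤ x ⬝ᵥ (A * ((P * St⁻¹ * Pᵀ) ⊙ (P * St⁻¹ * Pᵀ)) * Aᵀ).mulVec x ∧
      x ⬝ᵥ (A * ((P * St⁻¹ * Pᵀ) ⊙ (P * St⁻¹ * Pᵀ)) * Aᵀ).mulVec x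
        ≤ Real.exp (2*ε) * (x ⬝ᵥ (A * ((P * S⁻¹ * Pᵀ) ⊙ (P * S⁻¹ * Pᵀ)) * Aᵀ).mulVec x) := by
  have hSt_approx : SpectralApprox ε St S :=
    .of_forall_dotProduct_mulVec hSt.isHermitian hS.isHermitian happrox
  have hN : (P * S⁻¹ * Pᵀ).PosSemidef := by
    simpa [conjTranspose_eq_transpose_of_trivial] using
      hS.inv.posSemidef.mul_mul_conjTranspose_same P
  exact (((hSt_approx.inv hS).mul_mul_transpose P).hadamard_self hN).mul_mul_transpose A
    |>.dotProduct_mulVec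

theorem stmt_7 {U L m : ℕ} (P : Matrix (Fin U) (Fin L) ℝ) (A : Matrix (Fin m) (Fin U) ℝ)
    (S St : Matrix (Fin L) (Fin L) ℝ) (hS : S.PosDef) (hSt : St.PosDef)
    (ε : ℝ) (hε : ε ∈ Set.Ioo (0:ℝ) (1/2))
    (happrox : ∀ x : Fin L → ℝ,
      Real.exp (-ε) * (x ⬝ᵥ S.mulVec x) ≤ x ⬝ᵥ St.mulVec x ∧
      x ⬝ᵥ St.mulVec x ≤ Real.exp ε * (x ⬝ᵥ S.mulVec x)) :
    ∀ x : Fin m → ℝ,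
      Real.exp (-(2*ε)) * (x ⬝ᵥ (A * ((P * S⁻¹ * Pᵀ) ⊙ (P * S⁻¹ * Pᵀ)) * Aᵀ).mulVec x)
        ≤ x ⬝ᵥ (A * ((P * St⁻¹ * Pᵀ) ⊙ (P * St⁻¹ * Pᵀ)) * Aᵀ).mulVec x ∧
      x ⬝ᵥ (A * ((P * St⁻¹ * Pᵀ) ⊙ (P * St⁻¹ * Pᵀ)) * Aᵀ).mulVec x
        ≤ Real.exp (2*ε) * (x ⬝ᵥ (A * ((P * S⁻¹ * Pᵀ) ⊙ (P * S⁻¹ * Pᵀ)) * Aᵀ).mulVec x) :=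
  stmt_7_general P A S St hS hSt ε happrox
end

section
/- Let 0 < δ < 1, let P ∈ ℝ^{U×L} have rank L, and let s ∈ ℝ^{U} satisfy 1−δ ≤ s_u ≤ 1+δ for all u. Then Pᵀdiag(s)P is positive definite and L/(1+δ) ≤ tr(P (Pᵀdiag(s)P)⁻¹ Pᵀ) ≤ L/(1−δ). -/
/-!
Write `M = Pᵀ diag(s) P` and `N = Pᵀ P`. Full column rank makes `P` injective, so `M` is
positive definite, and `1 - δ ≤ s ≤ 1 + δ` gives `(1 - δ) N ≼ M ≼ (1 + δ) N` in the Loewner order.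
The trace in question is `tr (M⁻¹ N)` by cyclicity. Since `M⁻¹` is positive semidefinite and the
trace of a product of two positive semidefinite matrices is nonnegative, multiplying the sandwich
by `M⁻¹` and taking traces yields `(1 - δ) tr (M⁻¹ N) ≤ tr (M⁻¹ M) = L ≤ (1 + δ) tr (M⁻¹ N)`.
-/

open Matrix
open scoped ComplexOrder

namespace Matrix

theorem mulVec_injective_of_rank_eq_card {m n K : Type*} [Fintype n] [Field K] (P : Matrix m n K)
    (hP : P.rank = Fintype.card n) : Function.Injective P.mulVec := by
  have hker : Module.finrank K (LinearMap.ker P.mulVecLin) = 0 := by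
    have := LinearMap.finrank_range_add_finrank_ker P.mulVecLin
    rw [Module.finrank_fintype_fun_eq_card] at this
    unfold Matrix.rank at hP
    omega
  exact LinearMap.ker_eq_bot.mp (Submodule.finrank_eq_zero.mp hker)

section WeightedGram

variable {m n 𝕜 : Type*} [Fintype m] [DecidableEq m] [RCLike 𝕜]

theorem conjTranspose_mul_diagonal_const_mul (P : Matrix m n 𝕜) (c : 𝕜) :
    Pᴴ * diagonal (fun _ : m => c) * P = c • (Pᴴ * P) := by
  rw [← smul_one_eq_diagonal, Matrix.mul_smul, Matrix.mul_one, Matrix.smul_mul]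

theorem posSemidef_conjTranspose_mul_diagonal_mul_sub [Fintype n] (P : Matrix m n 𝕜) {s t : m → 𝕜}
    (hts : ∀ u, t u ≤ s u) : (Pᴴ * diagonal s * P - Pᴴ * diagonal t * P).PosSemidef := by
  rw [← Matrix.sub_mul, ← Matrix.mul_sub, diagonal_sub]
  exact (posSemidef_diagonal_iff.mpr fun u => sub_nonneg.mpr (hts u)).conjTranspose_mul_mul_same P

end WeightedGram

variable {n 𝕜 : Type*} [Fintype n] [DecidableEq n] [RCLike 𝕜]

open scoped MatrixOrder in
theorem PosSemidef.trace_mul_nonneg {A B : Matrix n n 𝕜} (hA : A.PosSemidef)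
    (hB : B.PosSemidef) : 0 ≤ (A * B).trace := by
  set R := CFC.sqrt A
  have hR : Rᴴ = R := (CFC.sqrt_nonneg A).isSelfAdjoint
  calc 0 ≤ (R * B * Rᴴ).trace := (hB.mul_mul_conjTranspose_same R).trace_nonneg
    _ = (A * B).trace := by rw [hR, trace_mul_cycle, CFC.sqrt_mul_sqrt_self A hA.nonneg]

theorem PosDef.card_le_mul_trace_inv_mul {M N : Matrix n n 𝕜} {c : 𝕜} (hM : M.PosDef)
    (h : (c • N - M).PosSemidef) : (Fintype.card n : 𝕜) ≤ c * (M⁻¹ * N).trace := by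
  have := hM.inv.posSemidef.trace_mul_nonneg h
  rwa [Matrix.mul_sub, mul_smul_comm, nonsing_inv_mul M ((isUnit_iff_isUnit_det M).mp hM.isUnit),
    trace_sub, trace_smul, trace_one, smul_eq_mul, sub_nonneg] at this

theorem PosDef.mul_trace_inv_mul_le_card {M N : Matrix n n 𝕜} {c : 𝕜} (hM : M.PosDef)
    (h : (M - c • N).PosSemidef) : c * (M⁻¹ * N).trace ≤ Fintype.card n := by
  have := hM.inv.posSemidef.trace_mul_nonneg h
  rwa [Matrix.mul_sub, mul_smul_comm, nonsing_inv_mul M ((isUnit_iff_isUnit_det M).mp hM.isUnit),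
    trace_sub, trace_smul, trace_one, smul_eq_mul, sub_nonneg] at this

end Matrix

theorem stmt_9 {U L : ℕ} (δ : ℝ) (hδ0 : 0 < δ) (hδ1 : δ < 1)
    (P : Matrix (Fin U) (Fin L) ℝ) (hP : P.rank = L)
    (s : Fin U → ℝ) (hs : ∀ u, 1 - δ ≤ s u ∧ s u ≤ 1 + δ) :
    (Pᵀ * Matrix.diagonal s * P).PosDef ∧
    (L : ℝ) / (1 + δ) ≤ Matrix.trace (P * (Pᵀ * Matrix.diagonal s * P)⁻¹ * Pᵀ) ∧
    Matrix.trace (P * (Pᵀ * Matrix.diagonal s * P)⁻¹ * Pᵀ) ≤ (L : ℝ) / (1 - δ) := by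
  rw [← conjTranspose_eq_transpose_of_trivial]
  have hinj := mulVec_injective_of_rank_eq_card P (by rw [hP, Fintype.card_fin])
  have hM : (Pᴴ * diagonal s * P).PosDef :=
    (posDef_diagonal_iff.mpr fun u => by linarith [(hs u).1]).conjTranspose_mul_mul_same hinj
  have hupper := posSemidef_conjTranspose_mul_diagonal_mul_sub P (t := s) (s := fun _ => 1 + δ)
    fun u => (hs u).2
  have hlower := posSemidef_conjTranspose_mul_diagonal_mul_sub P (s := s) (t := fun _ => 1 - δ)
    fun u => (hs u).1
  rw [conjTranspose_mul_diagonal_const_mul] at hupper hlower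
  have hcard_le := hM.card_le_mul_trace_inv_mul hupper
  have hle_card := hM.mul_trace_inv_mul_le_card hlower
  rw [Fintype.card_fin] at hcard_le hle_card
  rw [trace_mul_cycle, trace_mul_comm]
  refine ⟨hM, ?_, ?_⟩
  · rw [div_le_iff₀ (by linarith), mul_comm]
    exact hcard_le
  · rw [le_div_iff₀ (by linarith), mul_comm]
    exact hle_card
end
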